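/- arXiv:2110.14691 — 5 statements merged into one kernel-verified Lean document; each statement's English description precedes it below -/
import Mathlib

section
/- Let K be a finite-dimensional complex Hilbert space and let M be a von Neumann algebra on K (a subset of the algebra L(K) of linear operators on K closed under addition, operator multiplication, scalar multiplication and adjoints, and containing the identity operator of L(K)). Then the double commutant of M equals M, i.e. M'' = M. -/
/-!
`M` is a `*`-closed subalgebra, so the orthogonal complement of an `M`-invariant subspace of
`ℂ^ι` is again `M`-invariant, i.e. `ℂ^ι` is a semisimple `M`-module. The endomorphism ring of
this module is `M'`, so an element of `M''` is an `End_M(ℂ^ι)`-linear map, and the Jacobson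
density theorem yields an element of `M` agreeing with it on the standard basis.
-/

open Matrix

/-- The commutant `M' = {B : A * B = B * A for all A ∈ M}` of a set of operators on a
finite-dimensional complex Hilbert space (operators are represented as matrices with
respect to a fixed orthonormal basis indexed by `ι`). -/
def commutant {ι : Type*} [Fintype ι] (M : Set (Matrix ι ι ℂ)) : Set (Matrix ι ι ℂ) :=
  {B | ∀ A ∈ M, A * B = B * A}

/-- A von Neumann algebra on a finite-dimensional complex Hilbert space: a set of operators
closed under addition, multiplication, scalar multiplication and adjoints, containing the
identity operator. -/
structure IsVNAlgebra {ι : Type*} [Fintype ι] [DecidableEq ι]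
    (M : Set (Matrix ι ι ℂ)) : Prop where
  add_mem : ∀ A ∈ M, ∀ B ∈ M, A + B ∈ M
  mul_mem : ∀ A ∈ M, ∀ B ∈ M, A * B ∈ M
  smul_mem : ∀ (c : ℂ), ∀ A ∈ M, c • A ∈ M
  star_mem : ∀ A ∈ M, Aᴴ ∈ M
  one_mem : (1 : Matrix ι ι ℂ) ∈ M

namespace Matrix

variable {ι : Type*} [Fintype ι]

section Semisimple

variable {𝕜 : Type*} [RCLike 𝕜]

theorem inner_toLp_mulVec (A : Matrix ι ι 𝕜) (v w : ι → 𝕜) :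
    inner 𝕜 (WithLp.toLp 2 w) (WithLp.toLp 2 (A *ᵥ v)) =
      inner 𝕜 (WithLp.toLp 2 (Aᴴ *ᵥ w)) (WithLp.toLp 2 v) := by
  simp only [EuclideanSpace.inner_toLp_toLp, star_mulVec, conjTranspose_conjTranspose]
  rw [dotProduct_comm, dotProduct_mulVec, dotProduct_comm]

variable [DecidableEq ι] {S : Subalgebra 𝕜 (Matrix ι ι 𝕜)}

def euclideanSubspace (N : Submodule S (ι → 𝕜)) : Submodule 𝕜 (EuclideanSpace 𝕜 ι) :=
  (N.restrictScalars 𝕜).comap (WithLp.linearEquiv 2 𝕜 (ι → 𝕜)).toLinearMap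

def orthogonalSubmodule (hS : ∀ A ∈ S, Aᴴ ∈ S) (N : Submodule S (ι → 𝕜)) :
    Submodule S (ι → 𝕜) where
  carrier := {v | WithLp.toLp 2 v ∈ (euclideanSubspace N)ᗮ}
  add_mem' hv hw := by simpa using add_mem hv hw
  zero_mem' := by simp
  smul_mem' A v hv := by
    rw [Set.mem_ofPred_eq, Submodule.mem_orthogonal] at hv ⊢
    rintro ⟨w⟩ hw
    rw [Subalgebra.smul_def, smul_eq_mulVec, inner_toLp_mulVec]
    exact hv _ (N.smul_mem ⟨_, hS A A.2⟩ hw)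

theorem isCompl_orthogonalSubmodule (hS : ∀ A ∈ S, Aᴴ ∈ S) (N : Submodule S (ι → 𝕜)) :
    IsCompl N (orthogonalSubmodule hS N) := by
  constructor
  · rw [Submodule.disjoint_def]
    intro v hvN hv
    simpa using (euclideanSubspace N).orthogonal_disjoint.le_bot ⟨hvN, hv⟩
  · rw [Submodule.codisjoint_iff_exists_add_eq]
    intro v
    obtain ⟨⟨y⟩, hy, ⟨z⟩, hz, hv⟩ :=
      (euclideanSubspace N).exists_add_mem_mem_orthogonal (WithLp.toLp 2 v)
    exact ⟨y, z, hy, hz, congrArg WithLp.ofLp hv.symm⟩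

theorem isSemisimpleModule_of_conjTranspose_mem (hS : ∀ A ∈ S, Aᴴ ∈ S) :
    IsSemisimpleModule S (ι → 𝕜) where
  exists_isCompl N := ⟨_, isCompl_orthogonalSubmodule hS N⟩

end Semisimple

section DoubleCentralizer

variable [DecidableEq ι] {K : Type*} [Field K] {S : Subalgebra K (Matrix ι ι K)}

theorem toMatrix'_mem_centralizer (g : Module.End S (ι → K)) :
    LinearMap.toMatrix' (g.restrictScalars K) ∈ Set.centralizer (S : Set (Matrix ι ι K)) := by
  intro A hA
  refine toLin'.injective (LinearMap.ext fun v => ?_)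
  simp only [toLin'_mul, toLin'_toMatrix']
  exact (g.map_smul ⟨A, hA⟩ v).symm

@[simps]
def mulVecEndEnd (T : Matrix ι ι K)
    (hT : T ∈ Set.centralizer (Set.centralizer (S : Set (Matrix ι ι K)))) :
    Module.End (Module.End S (ι → K)) (ι → K) where
  toFun v := T *ᵥ v
  map_add' := mulVec_add T
  map_smul' g v := by
    have hg (w : ι → K) : g w = LinearMap.toMatrix' (g.restrictScalars K) *ᵥ w :=
      (LinearMap.toMatrix'_mulVec (g.restrictScalars K) w).symm
    simp only [Module.End.smul_def, RingHom.id_apply, hg, mulVec_mulVec,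
      hT _ (toMatrix'_mem_centralizer g)]

theorem centralizer_centralizer_eq_of_isSemisimpleModule [IsSemisimpleModule S (ι → K)] :
    Set.centralizer (Set.centralizer (S : Set (Matrix ι ι K))) = S := by
  classical
  refine Set.Subset.antisymm (fun T hT => ?_) Set.subset_centralizer_centralizer
  obtain ⟨A, hA⟩ :=
    jacobson_density (mulVecEndEnd T hT) (Finset.univ.image fun i => Pi.single i 1)
  have hTA : T = A := by
    ext i j
    simpa [Subalgebra.smul_def, smul_eq_mulVec] using congrFun (hA (Pi.single j 1) (by simp)) i
  exact hTA ▸ A.2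

end DoubleCentralizer

end Matrix

def IsVNAlgebra.toSubalgebra {ι : Type*} [Fintype ι] [DecidableEq ι] {M : Set (Matrix ι ι ℂ)}
    (hM : IsVNAlgebra M) : Subalgebra ℂ (Matrix ι ι ℂ) where
  carrier := M
  mul_mem' ha hb := hM.mul_mem _ ha _ hb
  add_mem' ha hb := hM.add_mem _ ha _ hb
  algebraMap_mem' c := by
    simpa [Algebra.algebraMap_eq_smul_one] using hM.smul_mem c 1 hM.one_mem

/-- bicommutant theorem: for every von Neumann algebra `M` on a
finite-dimensional complex Hilbert space, the double commutant equals `M`: `M'' = M`. -/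
theorem bicommutant_eq_self {ι : Type*} [Fintype ι] [DecidableEq ι]
    (M : Set (Matrix ι ι ℂ)) (hM : IsVNAlgebra M) :
    commutant (commutant M) = M :=
  have : IsSemisimpleModule hM.toSubalgebra (ι → ℂ) :=
    isSemisimpleModule_of_conjTranspose_mem hM.star_mem
  centralizer_centralizer_eq_of_isSemisimpleModule (S := hM.toSubalgebra)
end

section
/- Let M be a von Neumann algebra on a finite-dimensional complex Hilbert space H and let ρ be a density matrix on H. Then there exists a unique density matrix ρ_M belonging to M such that Tr(O ρ_M) = Tr(O ρ) for every O ∈ M. -/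
/-!
The trace pairing `(O, A) ↦ Tr(O A)` is nondegenerate on any space of matrices closed under `ᴴ`,
since `Tr(Aᴴ A) = 0` forces `A = 0`. Hence `O ↦ Tr(O ρ)` is represented on `M` by a unique
`σ ∈ M`; it is Hermitian because `σᴴ` represents the same functional, and has trace one by testing
against `O = 1`. For positivity, the negative part `σ⁻` lies in `M` (the functional calculus stays
inside a closed *-subalgebra), so `0 ≤ Tr(σ⁻ ρ) = Tr(σ⁻ σ) = -Tr(σ⁻ σ⁻) ≤ 0`, forcing `σ⁻ = 0`.
-/

open Matrix
open scoped ComplexOrder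

namespace Matrix

variable {n 𝕜 : Type*} [Fintype n] [RCLike 𝕜]

lemma trace_mul_conjTranspose {R : Type*} [CommSemiring R] [StarRing R] (O A : Matrix n n R) :
    (O * Aᴴ).trace = star (Oᴴ * A).trace := by
  rw [← trace_conjTranspose, conjTranspose_mul, conjTranspose_conjTranspose, trace_mul_comm]

open scoped MatrixOrder in
lemma PosSemidef.trace_mul_nonneg {A B : Matrix n n 𝕜} (hA : A.PosSemidef) (hB : B.PosSemidef) :
    0 ≤ (A * B).trace := by
  classical
  obtain ⟨C, rfl⟩ := CStarAlgebra.nonneg_iff_eq_star_mul_self.mp hA.nonneg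
  rw [star_eq_conjTranspose, mul_assoc, trace_mul_comm]
  exact (hB.mul_mul_conjTranspose_same C).trace_nonneg

section StarClosedSubspace

variable {S : Submodule 𝕜 (Matrix n n 𝕜)} (hS : ∀ A ∈ S, Aᴴ ∈ S)
include hS

lemma eq_of_forall_trace_mul_eq {A B : Matrix n n 𝕜} (hA : A ∈ S) (hB : B ∈ S)
    (h : ∀ O ∈ S, (O * A).trace = (O * B).trace) : A = B := by
  have hAB : ((A - B)ᴴ * (A - B)).trace = 0 := by
    rw [mul_sub, trace_sub, h _ (hS _ (sub_mem hA hB)), sub_self]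
  exact sub_eq_zero.mp (trace_conjTranspose_mul_self_eq_zero_iff.mp hAB)

lemma exists_mem_forall_trace_mul_eq (ρ : Matrix n n 𝕜) :
    ∃ σ ∈ S, ∀ O ∈ S, (O * σ).trace = (O * ρ).trace := by
  let pairing : S →ₗ[𝕜] Module.Dual 𝕜 S :=
    (((LinearMap.mul 𝕜 (Matrix n n 𝕜)).compl₁₂ S.subtype S.subtype).compr₂
      (traceLinearMap n 𝕜 𝕜)).flip
  have hinj : Function.Injective pairing := by
    rw [← LinearMap.ker_eq_bot, LinearMap.ker_eq_bot']
    intro A hA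
    exact Subtype.ext <| eq_of_forall_trace_mul_eq hS A.2 S.zero_mem fun O hO => by
      simpa [pairing] using LinearMap.congr_fun hA ⟨O, hO⟩
  obtain ⟨σ, hσ⟩ := (LinearMap.injective_iff_surjective_of_finrank_eq_finrank
    Subspace.dual_finrank_eq.symm).mp hinj
      (traceLinearMap n 𝕜 𝕜 ∘ₗ LinearMap.mulRight 𝕜 ρ ∘ₗ S.subtype)
  exact ⟨σ, σ.2, fun O hO => LinearMap.congr_fun hσ ⟨O, hO⟩⟩

lemma isHermitian_of_forall_trace_mul_eq {σ ρ : Matrix n n 𝕜} (hσ : σ ∈ S)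
    (hρ : ρ.IsHermitian) (h : ∀ O ∈ S, (O * σ).trace = (O * ρ).trace) : σ.IsHermitian := by
  refine eq_of_forall_trace_mul_eq hS (hS σ hσ) hσ fun O hO => ?_
  rw [trace_mul_conjTranspose, h _ (hS O hO), ← trace_conjTranspose, conjTranspose_mul, hρ.eq,
    trace_mul_comm, conjTranspose_conjTranspose, h O hO]

end StarClosedSubspace

open scoped MatrixOrder in
lemma posSemidef_of_forall_trace_mul_nonneg [DecidableEq n]
    (S : StarSubalgebra 𝕜 (Matrix n n 𝕜)) {A : Matrix n n 𝕜} (hAS : A ∈ S) (hA : A.IsHermitian)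
    (h : ∀ B ∈ S, B.PosSemidef → 0 ≤ (B * A).trace) : A.PosSemidef := by
  have : IsClosed (S : Set (Matrix n n 𝕜)) :=
    S.toSubalgebra.toSubmodule.closed_of_finiteDimensional
  have hneg : A⁻ ∈ S := cfcₙ_mem (𝕜' := 𝕜) _ hAS
  have hneg_psd : (A⁻).PosSemidef := (CFC.negPart_nonneg A).posSemidef
  have htrace : (A⁻ * A).trace = -((A⁻)ᴴ * A⁻).trace := by
    nth_rw 2 [← CFC.posPart_sub_negPart A hA.isSelfAdjoint]
    rw [mul_sub, CFC.negPart_mul_posPart, zero_sub, trace_neg, hneg_psd.isHermitian.eq]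
  have hzero : ((A⁻)ᴴ * A⁻).trace = 0 :=
    le_antisymm (neg_nonneg.mp (htrace ▸ h _ hneg hneg_psd))
      (posSemidef_conjTranspose_mul_self _).trace_nonneg
  rw [trace_conjTranspose_mul_self_eq_zero_iff, CFC.negPart_eq_zero_iff A hA.isSelfAdjoint] at hzero
  exact hzero.posSemidef

end Matrix

namespace IsVNAlgebra

variable {ι : Type*} [Fintype ι] [DecidableEq ι] {M : Set (Matrix ι ι ℂ)}

def toStarSubalgebra (hM : IsVNAlgebra M) : StarSubalgebra ℂ (Matrix ι ι ℂ) where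
  carrier := M
  mul_mem' {A B} hA hB := hM.mul_mem A hA B hB
  add_mem' {A B} hA hB := hM.add_mem A hA B hB
  algebraMap_mem' c := by
    simpa [Algebra.algebraMap_eq_smul_one] using hM.smul_mem c 1 hM.one_mem
  star_mem' := hM.star_mem _

end IsVNAlgebra

/-- for a von Neumann algebra `M` on a finite-dimensional complex Hilbert
space and a density matrix `ρ` (positive semidefinite, trace one), there exists a unique
density matrix `ρ_M ∈ M` (the algebraic state) with `Tr(O ρ_M) = Tr(O ρ)` for all `O ∈ M`. -/
theorem exists_unique_algebraic_state {ι : Type*} [Fintype ι] [DecidableEq ι]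
    (M : Set (Matrix ι ι ℂ)) (hM : IsVNAlgebra M)
    (ρ : Matrix ι ι ℂ) (hρ : ρ.PosSemidef) (hρtr : ρ.trace = 1) :
    ∃! σ : Matrix ι ι ℂ,
      σ ∈ M ∧ σ.PosSemidef ∧ σ.trace = 1 ∧
        ∀ O ∈ M, (O * σ).trace = (O * ρ).trace := by
  have hS : ∀ A ∈ hM.toStarSubalgebra.toSubalgebra.toSubmodule,
      Aᴴ ∈ hM.toStarSubalgebra.toSubalgebra.toSubmodule := hM.star_mem
  obtain ⟨σ, hσM, hσ⟩ : ∃ σ ∈ M, ∀ O ∈ M, (O * σ).trace = (O * ρ).trace :=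
    exists_mem_forall_trace_mul_eq hS ρ
  have hσ_herm := isHermitian_of_forall_trace_mul_eq hS hσM hρ.isHermitian hσ
  have hσ_psd : σ.PosSemidef :=
    posSemidef_of_forall_trace_mul_nonneg hM.toStarSubalgebra hσM hσ_herm
      fun B hB hB_psd => hσ B hB ▸ hB_psd.trace_mul_nonneg hρ
  refine ⟨σ, ⟨hσM, hσ_psd, by simpa [hρtr] using hσ 1 hM.one_mem, hσ⟩, ?_⟩
  rintro τ ⟨hτM, -, -, hτ⟩
  exact eq_of_forall_trace_mul_eq hS hτM hσM fun O hO => (hτ O hO).trans (hσ O hO).symm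
end

section
/- Let H_L and H be finite-dimensional complex Hilbert spaces, V : H_L → H an isometry, H = H_A ⊗ H_Ā a tensor factorization, and suppose M := V†(L(H_A) ⊗ I_Ā)V is a von Neumann algebra on H_L. Let ρ be a density matrix on H_L and let ρ_M be its algebraic state with respect to M, i.e. the unique density matrix in M with Tr(O ρ_M) = Tr(O ρ) for all O ∈ M. Then Tr_Ā(V ρ V†) = Tr_Ā(V ρ_M V†). -/
open Matrix Kronecker
open scoped ComplexOrder

/-- The set `V†(L(H_A) ⊗ I_Ā)V` of logical operators correctable from `A`. -/
def correctableOps {ιA ιB ιL : Type*} [Fintype ιA] [Fintype ιB] [DecidableEq ιB]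
    [Fintype ιL] (V : Matrix (ιA × ιB) ιL ℂ) : Set (Matrix ιL ιL ℂ) :=
  {O | ∃ OA : Matrix ιA ιA ℂ, O = Vᴴ * (OA ⊗ₖ (1 : Matrix ιB ιB ℂ)) * V}

/-- Partial trace over the second (right) tensor factor. -/
noncomputable def ptraceRight {ιA ιB : Type*} [Fintype ιB]
    (ρ : Matrix (ιA × ιB) (ιA × ιB) ℂ) : Matrix ιA ιA ℂ :=
  Matrix.of fun x y => ∑ j : ιB, ρ (x, j) (y, j)


private lemma trace_stdBasis_kron_mul {ιA ιB : Type*} [Fintype ιA] [DecidableEq ιA]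
    [Fintype ιB] [DecidableEq ιB]
    (x y : ιA) (M : Matrix (ιA × ιB) (ιA × ιB) ℂ) :
    ((Matrix.single y x (1:ℂ) ⊗ₖ (1 : Matrix ιB ιB ℂ)) * M).trace
      = ∑ j : ιB, M (x, j) (y, j) := by
  simp [Matrix.trace, Matrix.mul_apply, Matrix.diag, Fintype.sum_prod_type,
    Matrix.single, Matrix.one_apply, ite_and, Finset.sum_ite_eq,
    Finset.sum_ite_eq']

/-- suppose `M := V†(L(H_A) ⊗ I_Ā)V` is a von Neumann algebra on `H_L`,
`ρ` is a density matrix on `H_L`, and `σ = ρ_M` is its algebraic state with respect to `M`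
(the density matrix in `M` whose expectations agree with those of `ρ` on all of `M`).
Then `Tr_Ā(V ρ V†) = Tr_Ā(V ρ_M V†)`. -/
theorem ptrace_encoded_eq_of_algebraic_state {ιA ιB ιL : Type*}
    [Fintype ιA] [DecidableEq ιA] [Fintype ιB] [DecidableEq ιB]
    [Fintype ιL] [DecidableEq ιL]
    (V : Matrix (ιA × ιB) ιL ℂ) (hV : Vᴴ * V = 1)
    (hVN : IsVNAlgebra (correctableOps V))
    (ρ : Matrix ιL ιL ℂ) (hρ : ρ.PosSemidef) (hρtr : ρ.trace = 1)
    (σ : Matrix ιL ιL ℂ) (hσmem : σ ∈ correctableOps V)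
    (hσ : σ.PosSemidef) (hσtr : σ.trace = 1)
    (hexp : ∀ O ∈ correctableOps V, (O * σ).trace = (O * ρ).trace) :
    ptraceRight (V * ρ * Vᴴ) = ptraceRight (V * σ * Vᴴ) := by
  ext x y
  have key : ∀ τ : Matrix ιL ιL ℂ,
      ∑ j : ιB, (V * τ * Vᴴ) (x, j) (y, j)
        = ((Vᴴ * (Matrix.single y x (1:ℂ) ⊗ₖ (1 : Matrix ιB ιB ℂ)) * V) * τ).trace := by
    intro τ
    rw [← trace_stdBasis_kron_mul x y (V * τ * Vᴴ)]
    have h1 : (Matrix.single y x (1:ℂ) ⊗ₖ (1 : Matrix ιB ιB ℂ)) * (V * τ * Vᴴ)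
        = (Matrix.single y x (1:ℂ) ⊗ₖ (1 : Matrix ιB ιB ℂ)) * (V * τ) * Vᴴ := by
      simp [Matrix.mul_assoc]
    rw [h1, Matrix.trace_mul_cycle]
    congr 1
    simp [Matrix.mul_assoc]
  simp only [ptraceRight, Matrix.of_apply]
  rw [key ρ, key σ]
  exact (hexp _ ⟨_, rfl⟩).symm
end

section
/- Let G be a stabilizer group on n qubits, i.e. an abelian subgroup of the n-qubit Pauli group not containing -I, with nonzero code space C = {ψ ∈ (ℂ²)^⊗n : gψ = ψ for all g ∈ G}, and let V_G : H_L → (ℂ²)^⊗n be any isometry whose range is C. Let A ⊆ {1,…,n} be any subset of the qubits, inducing the factorization (ℂ²)^⊗n ≅ H_A ⊗ H_Ā. Then the set M := V_G†(L(H_A) ⊗ I_Ā)V_G is closed under operator multiplication; consequently M is a von Neumann algebra on H_L and (V_G, A, M) satisfies complementary recovery. -/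
open Matrix Kronecker

/-- The single-qubit Pauli matrices `I, X, Y, Z`. -/
noncomputable def pauli1 : Fin 4 → Matrix (Fin 2) (Fin 2) ℂ :=
  ![1, !![0, 1; 1, 0], !![0, -Complex.I; Complex.I, 0], !![1, 0; 0, -1]]

/-- Membership in the `n`-qubit Pauli group: operators of the form `c · P₁ ⊗ ⋯ ⊗ Pₙ`
with `c ∈ {1, -1, i, -i}` and each `P_k ∈ {I, X, Y, Z}`.  The `n`-qubit Hilbert space
`(ℂ²)^⊗n` is indexed by `Fin n → Fin 2`. -/
def IsPauliOp {n : ℕ} (P : Matrix (Fin n → Fin 2) (Fin n → Fin 2) ℂ) : Prop :=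
  ∃ (c : ℂ) (f : Fin n → Fin 4),
    (c = 1 ∨ c = -1 ∨ c = Complex.I ∨ c = -Complex.I) ∧
    P = Matrix.of fun x y => c * ∏ i, pauli1 (f i) (x i) (y i)

/-- The factorization `(ℂ²)^⊗n ≅ H_A ⊗ H_Ā` induced by a subset `A = {k : p k}` of the
qubits. -/
def splitEquiv {n : ℕ} (p : Fin n → Prop) [DecidablePred p] :
    (Fin n → Fin 2) ≃ ({ k // p k } → Fin 2) × ({ k // ¬ p k } → Fin 2) :=
  (Equiv.arrowCongr (Equiv.sumCompl p).symm (Equiv.refl _)).trans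
    (Equiv.sumArrowEquivProdArrow _ _ _)

/-- The set `V†(L(H_A) ⊗ I_Ā)V` of logical operators correctable from the subset `A` of
the qubits, with respect to the encoding isometry `V`. -/
def qubitCorrectable {n : ℕ} {ιL : Type*} [Fintype ιL]
    (p : Fin n → Prop) [DecidablePred p]
    (V : Matrix (Fin n → Fin 2) ιL ℂ) : Set (Matrix ιL ιL ℂ) :=
  {O | ∃ OA : Matrix ({ k // p k } → Fin 2) ({ k // p k } → Fin 2) ℂ,
    O = Vᴴ * ((OA ⊗ₖ (1 : Matrix ({ k // ¬ p k } → Fin 2) ({ k // ¬ p k } → Fin 2) ℂ)).submatrix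
      (splitEquiv p) (splitEquiv p)) * V}

/-- The set `V†(I_A ⊗ L(H_Ā))V` of logical operators correctable from the complementary
subset `Ā` of the qubits. -/
def qubitCorrectableBar {n : ℕ} {ιL : Type*} [Fintype ιL]
    (p : Fin n → Prop) [DecidablePred p]
    (V : Matrix (Fin n → Fin 2) ιL ℂ) : Set (Matrix ιL ιL ℂ) :=
  {O | ∃ OB : Matrix ({ k // ¬ p k } → Fin 2) ({ k // ¬ p k } → Fin 2) ℂ,
    O = Vᴴ * (((1 : Matrix ({ k // p k } → Fin 2) ({ k // p k } → Fin 2) ℂ) ⊗ₖ OB).submatrix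
      (splitEquiv p) (splitEquiv p)) * V}

namespace StabAux

lemma pauli1_mul_self (t : Fin 4) : pauli1 t * pauli1 t = 1 := by
  fin_cases t <;> simp [pauli1, Matrix.one_fin_two, Matrix.mul_fin_two, Complex.I_mul_I]

lemma pauli1_conjTranspose (t : Fin 4) : (pauli1 t)ᴴ = pauli1 t := by
  fin_cases t <;> ext i j <;> fin_cases i <;> fin_cases j <;>
    simp [pauli1, Matrix.conjTranspose_apply, Matrix.one_apply]

lemma pauli1_twirl (a b c d : Fin 2) :
    ∑ t : Fin 4, pauli1 t a b * pauli1 t c d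
      = 2 * (if a = d then 1 else 0) * (if b = c then 1 else 0) := by
  fin_cases a <;> fin_cases b <;> fin_cases c <;> fin_cases d <;>
    simp [pauli1, Fin.sum_univ_four, Matrix.one_apply, Complex.I_mul_I] <;> norm_num

lemma pauli1_trace (t : Fin 4) : (pauli1 t).trace = if t = 0 then 2 else 0 := by
  fin_cases t <;> simp [pauli1, Matrix.trace_fin_two, Matrix.one_fin_two] <;> norm_num

variable {ι : Type*} [Fintype ι] [DecidableEq ι]

/-- The Pauli word with pattern `f`. -/
noncomputable def pw (f : ι → Fin 4) : Matrix (ι → Fin 2) (ι → Fin 2) ℂ :=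
  Matrix.of fun x y => ∏ i, pauli1 (f i) (x i) (y i)

lemma pw_apply (f : ι → Fin 4) (x y : ι → Fin 2) :
    pw f x y = ∏ i, pauli1 (f i) (x i) (y i) := rfl

lemma pw_mul_pw (f g : ι → Fin 4) :
    pw f * pw g = Matrix.of fun x y => ∏ i, (pauli1 (f i) * pauli1 (g i)) (x i) (y i) := by
  ext x y
  simp only [Matrix.mul_apply, pw_apply, Matrix.of_apply]
  calc ∑ m : ι → Fin 2, (∏ i, pauli1 (f i) (x i) (m i)) * ∏ i, pauli1 (g i) (m i) (y i)
      = ∑ m : ι → Fin 2, ∏ i, (pauli1 (f i) (x i) (m i) * pauli1 (g i) (m i) (y i)) := by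
        simp [Finset.prod_mul_distrib]
    _ = ∏ i, ∑ t : Fin 2, pauli1 (f i) (x i) t * pauli1 (g i) t (y i) :=
        (Fintype.prod_sum fun i t => pauli1 (f i) (x i) t * pauli1 (g i) t (y i)).symm
    _ = ∏ i, (pauli1 (f i) * pauli1 (g i)) (x i) (y i) := by
        simp [Matrix.mul_apply]

lemma one_eq_pwone : (1 : Matrix (ι → Fin 2) (ι → Fin 2) ℂ)
    = Matrix.of fun x y => ∏ i, (1 : Matrix (Fin 2) (Fin 2) ℂ) (x i) (y i) := by
  ext x y
  simp only [Matrix.of_apply, Matrix.one_apply, Finset.prod_boole]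
  simp [funext_iff]

lemma pw_sq (f : ι → Fin 4) : pw f * pw f = 1 := by
  rw [pw_mul_pw, one_eq_pwone]
  congr 1; ext x y
  exact Finset.prod_congr rfl fun i _ => by rw [pauli1_mul_self]

lemma pw_conjTranspose (f : ι → Fin 4) : (pw f)ᴴ = pw f := by
  ext x y
  simp only [Matrix.conjTranspose_apply, pw_apply, star_prod]
  refine Finset.prod_congr rfl fun i _ => ?_
  rw [← Matrix.conjTranspose_apply, pauli1_conjTranspose]

lemma pw_of_zero (f : ι → Fin 4) (h : ∀ i, f i = 0) : pw f = 1 := by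
  rw [one_eq_pwone]
  ext x y
  exact Finset.prod_congr rfl fun i _ => by rw [h i]; rfl

lemma pw_trace (f : ι → Fin 4) : (pw f).trace = ∏ i, (pauli1 (f i)).trace := by
  simp only [Matrix.trace, Matrix.diag, pw_apply, Matrix.of_apply]
  rw [← Fintype.prod_sum fun i t => pauli1 (f i) t t]

lemma pw_pair_sum (x k l y : ι → Fin 2) :
    ∑ f : ι → Fin 4, pw f x k * pw f l y
      = (Fintype.card (ι → Fin 2) : ℂ) * (if x = y then 1 else 0) * (if k = l then 1 else 0) := by
  calc ∑ f : ι → Fin 4, pw f x k * pw f l y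
      = ∑ f : ι → Fin 4, ∏ i, (pauli1 (f i) (x i) (k i) * pauli1 (f i) (l i) (y i)) := by
        simp [pw_apply, Finset.prod_mul_distrib]
    _ = ∏ i, ∑ t : Fin 4, pauli1 t (x i) (k i) * pauli1 t (l i) (y i) :=
        (Fintype.prod_sum fun i t => pauli1 t (x i) (k i) * pauli1 t (l i) (y i)).symm
    _ = ∏ i, (2 * (if x i = y i then 1 else 0) * (if k i = l i then 1 else 0) : ℂ) :=
        Finset.prod_congr rfl fun i _ => pauli1_twirl _ _ _ _
    _ = (Fintype.card (ι → Fin 2) : ℂ) * (if x = y then 1 else 0) * (if k = l then 1 else 0) := by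
        rw [Finset.prod_mul_distrib, Finset.prod_mul_distrib, Finset.prod_const,
          Fintype.prod_boole, Fintype.prod_boole, Fintype.card_fun]
        simp [funext_iff, Fintype.card_fin]

lemma pw_twirl (M : Matrix (ι → Fin 2) (ι → Fin 2) ℂ) :
    ∑ f : ι → Fin 4, pw f * M * pw f
      = ((Fintype.card (ι → Fin 2) : ℂ) * M.trace) • 1 := by
  ext x y
  rw [Matrix.sum_apply]
  calc ∑ f : ι → Fin 4, (pw f * M * pw f) x y
      = ∑ f : ι → Fin 4, ∑ l, ∑ k, M k l * (pw f x k * pw f l y) := by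
        refine Finset.sum_congr rfl fun f _ => ?_
        rw [Matrix.mul_apply]
        refine Finset.sum_congr rfl fun l _ => ?_
        rw [Matrix.mul_apply, Finset.sum_mul]
        refine Finset.sum_congr rfl fun k _ => by ring
    _ = ∑ l, ∑ k, M k l * ∑ f : ι → Fin 4, (pw f x k * pw f l y) := by
        rw [Finset.sum_comm]
        refine Finset.sum_congr rfl fun l _ => ?_
        rw [Finset.sum_comm]
        exact Finset.sum_congr rfl fun k _ => (Finset.mul_sum _ _ _).symm
    _ = ∑ l, ∑ k, M k l * ((Fintype.card (ι → Fin 2) : ℂ)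
          * (if x = y then 1 else 0) * (if k = l then 1 else 0)) := by
        simp only [pw_pair_sum]
    _ = ((Fintype.card (ι → Fin 2) : ℂ) * M.trace) • (1 : Matrix (ι → Fin 2) (ι → Fin 2) ℂ) x y := by
        simp only [mul_ite, mul_one, mul_zero, Finset.sum_ite_eq', Finset.mem_univ, if_true,
          Matrix.smul_apply, Matrix.one_apply, smul_eq_mul, Matrix.trace, Matrix.diag,
          Finset.mul_sum, Finset.sum_mul]
        by_cases h : x = y <;> simp [h, mul_comm]

lemma pw_twirl_kron {β : Type*} [Fintype β] [DecidableEq β]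
    (Y : Matrix ((ι → Fin 2) × β) ((ι → Fin 2) × β) ℂ) :
    ∑ f : ι → Fin 4, (pw f ⊗ₖ (1 : Matrix β β ℂ)) * Y * (pw f ⊗ₖ 1)
      = (1 : Matrix (ι → Fin 2) (ι → Fin 2) ℂ) ⊗ₖ
          (Matrix.of fun b b' => (Fintype.card (ι → Fin 2) : ℂ) * ∑ k, Y (k, b) (k, b')) := by
  ext ⟨a, b⟩ ⟨a', b'⟩
  rw [Matrix.sum_apply]
  calc ∑ f : ι → Fin 4, ((pw f ⊗ₖ (1 : Matrix β β ℂ)) * Y * (pw f ⊗ₖ (1 : Matrix β β ℂ))) (a, b) (a', b')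
      = ∑ f : ι → Fin 4, ∑ l, ∑ k, Y (k, b) (l, b') * (pw f a k * pw f l a') := by
        refine Finset.sum_congr rfl fun f _ => ?_
        rw [Matrix.mul_apply, Fintype.sum_prod_type]
        refine Finset.sum_congr rfl fun l _ => ?_
        calc ∑ lb, ((pw f ⊗ₖ (1 : Matrix β β ℂ)) * Y) (a, b) (l, lb) * (pw f ⊗ₖ (1 : Matrix β β ℂ)) (l, lb) (a', b')
            = ∑ lb, ((pw f ⊗ₖ (1 : Matrix β β ℂ)) * Y) (a, b) (l, lb)
                * (pw f l a' * (if lb = b' then 1 else 0)) := by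
              refine Finset.sum_congr rfl fun lb _ => ?_
              rw [Matrix.kroneckerMap_apply, Matrix.one_apply]
          _ = ((pw f ⊗ₖ (1 : Matrix β β ℂ)) * Y) (a, b) (l, b') * pw f l a' := by
              simp [mul_ite, Finset.sum_ite_eq', mul_comm]
          _ = ∑ k, Y (k, b) (l, b') * (pw f a k * pw f l a') := by
              rw [Matrix.mul_apply, Fintype.sum_prod_type, Finset.sum_mul]
              refine Finset.sum_congr rfl fun k _ => ?_
              calc (∑ kb, (pw f ⊗ₖ (1 : Matrix β β ℂ)) (a, b) (k, kb) * Y (k, kb) (l, b')) * pw f l a'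
                  = (∑ kb, pw f a k * (if b = kb then 1 else 0) * Y (k, kb) (l, b')) * pw f l a' := by
                    refine congrArg (· * pw f l a') (Finset.sum_congr rfl fun kb _ => ?_)
                    rw [Matrix.kroneckerMap_apply, Matrix.one_apply]
                  _ = Y (k, b) (l, b') * (pw f a k * pw f l a') := by
                    simp only [mul_ite, mul_one, mul_zero, ite_mul, zero_mul,
                      Finset.sum_ite_eq, Finset.mem_univ, if_true]
                    ring
    _ = ∑ l, ∑ k, Y (k, b) (l, b') * ∑ f : ι → Fin 4, (pw f a k * pw f l a') := by
        rw [Finset.sum_comm]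
        refine Finset.sum_congr rfl fun l _ => ?_
        rw [Finset.sum_comm]
        exact Finset.sum_congr rfl fun k _ => (Finset.mul_sum _ _ _).symm
    _ = ∑ l, ∑ k, Y (k, b) (l, b') * ((Fintype.card (ι → Fin 2) : ℂ)
          * (if a = a' then 1 else 0) * (if k = l then 1 else 0)) := by
        simp only [pw_pair_sum]
    _ = ((1 : Matrix (ι → Fin 2) (ι → Fin 2) ℂ) ⊗ₖ
          (Matrix.of fun b b' => (Fintype.card (ι → Fin 2) : ℂ) * ∑ k, Y (k, b) (k, b'))) (a, b) (a', b') := by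
        rw [Matrix.kroneckerMap_apply, Matrix.one_apply, Matrix.of_apply]
        simp only [mul_ite, mul_one, mul_zero, Finset.sum_ite_eq', Finset.mem_univ, if_true]
        by_cases h : a = a' <;> simp [h, Finset.mul_sum, mul_comm]

lemma kron_sum_left {γ l m : Type*} (s : Finset γ)
    (F : γ → Matrix l l ℂ) (B : Matrix m m ℂ) :
    (∑ x ∈ s, F x) ⊗ₖ B = ∑ x ∈ s, (F x ⊗ₖ B) := by
  ext ⟨i, j⟩ ⟨k, t⟩
  simp [Matrix.kroneckerMap_apply, Matrix.sum_apply, Finset.sum_mul]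

lemma kron_conjTranspose {l m o q : Type*} (A : Matrix l m ℂ) (B : Matrix o q ℂ) :
    (A ⊗ₖ B)ᴴ = Aᴴ ⊗ₖ Bᴴ := by
  ext ⟨i, j⟩ ⟨k, t⟩
  simp [Matrix.conjTranspose_apply, Matrix.kroneckerMap_apply, star_mul', mul_comm]

lemma submatrix_sum {γ l m o q : Type*} (s : Finset γ) (F : γ → Matrix l m ℂ)
    (a : o → l) (b : q → m) :
    (∑ x ∈ s, F x).submatrix a b = ∑ x ∈ s, (F x).submatrix a b := by
  ext i j
  simp [Matrix.sum_apply]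

lemma submatrix_add' {l m o q : Type*} (A B : Matrix l m ℂ) (a : o → l) (b : q → m) :
    (A + B).submatrix a b = A.submatrix a b + B.submatrix a b := rfl

lemma submatrix_smul' {l m o q : Type*} (r : ℂ) (A : Matrix l m ℂ) (a : o → l) (b : q → m) :
    (r • A).submatrix a b = r • A.submatrix a b := rfl

lemma ext_mulVec {m l : Type*} [Fintype l] [DecidableEq l] {A B : Matrix m l ℂ}
    (h : ∀ x, A *ᵥ x = B *ᵥ x) : A = B := by
  ext i j
  have := congrFun (h (Pi.single j 1)) i
  simpa using this

lemma pw_split {n : ℕ} (p : Fin n → Prop) [DecidablePred p] (f : Fin n → Fin 4) :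
    pw f = ((pw fun k : {k // p k} => f k) ⊗ₖ (pw fun k : {k // ¬ p k} => f k)).submatrix
      (splitEquiv p) (splitEquiv p) := by
  ext x y
  simp only [Matrix.submatrix_apply, Matrix.kroneckerMap_apply, pw, Matrix.of_apply]
  rw [← Equiv.prod_comp (Equiv.sumCompl p) (fun i => pauli1 (f i) (x i) (y i)),
    Fintype.prod_sum_type]
  rfl

end StabAux

set_option maxHeartbeats 4000000

/-- let `G` be a stabilizer group on `n` qubits (an abelian subgroup of
the `n`-qubit Pauli group not containing `-I`) with nonzero code space
`C = {ψ : gψ = ψ for all g ∈ G}`, let `V` be an encoding isometry with range `C`, and let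
`A` (given by the predicate `p`) be any subset of the qubits.  Then the set
`M := V†(L(H_A) ⊗ I_Ā)V` is closed under operator multiplication; consequently `M` is a
von Neumann algebra and `(V, A, M)` satisfies complementary recovery. -/
theorem stabilizer_code_complementary_recovery {n : ℕ} {ιL : Type*}
    [Fintype ιL] [DecidableEq ιL]
    (G : Set (Matrix (Fin n → Fin 2) (Fin n → Fin 2) ℂ))
    (hpauli : ∀ g ∈ G, IsPauliOp g)
    (hone : (1 : Matrix (Fin n → Fin 2) (Fin n → Fin 2) ℂ) ∈ G)
    (hmul : ∀ g ∈ G, ∀ h ∈ G, g * h ∈ G)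
    (hinv : ∀ g ∈ G, ∃ h ∈ G, g * h = 1)
    (habel : ∀ g ∈ G, ∀ h ∈ G, g * h = h * g)
    (hneg : (-1 : Matrix (Fin n → Fin 2) (Fin n → Fin 2) ℂ) ∉ G)
    (hnonzero : ∃ ψ : (Fin n → Fin 2) → ℂ, ψ ≠ 0 ∧ ∀ g ∈ G, g *ᵥ ψ = ψ)
    (V : Matrix (Fin n → Fin 2) ιL ℂ) (hV : Vᴴ * V = 1)
    (hrange : Set.range V.mulVec = {ψ | ∀ g ∈ G, g *ᵥ ψ = ψ})
    (p : Fin n → Prop) [DecidablePred p] :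
    (∀ X ∈ qubitCorrectable p V, ∀ Y ∈ qubitCorrectable p V,
        X * Y ∈ qubitCorrectable p V) ∧
    IsVNAlgebra (qubitCorrectable p V) ∧
    qubitCorrectable p V ⊆ qubitCorrectable p V ∧
    commutant (qubitCorrectable p V) ⊆ qubitCorrectableBar p V := by
  classical
  open StabAux in
  -- kronecker/submatrix multiplication helper
  have hσmul : ∀ (M N : Matrix (({ k // p k } → Fin 2) × ({ k // ¬ p k } → Fin 2))
      (({ k // p k } → Fin 2) × ({ k // ¬ p k } → Fin 2)) ℂ),
      M.submatrix (splitEquiv p) (splitEquiv p) * N.submatrix (splitEquiv p) (splitEquiv p)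
        = (M * N).submatrix (splitEquiv p) (splitEquiv p) :=
    fun M N => Matrix.submatrix_mul_equiv M N _ (splitEquiv p) _
  choose! c f hc hrep using hpauli
  have hrep' : ∀ g ∈ G, g = c g • StabAux.pw (f g) := by
    intro g hg
    conv_lhs => rw [hrep g hg]
    ext x y
    simp [StabAux.pw]
  have hcc : ∀ g ∈ G, star (c g) * c g = 1 := by
    intro g hg
    rcases hc g hg with h | h | h | h <;> rw [h] <;>
      simp [Complex.star_def, Complex.conj_I, Complex.I_mul_I]
  -- star closure
  have hstar1 : ∀ g ∈ G, gᴴ * g = 1 ∧ g * gᴴ = 1 := by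
    intro g hg
    rw [hrep' g hg, Matrix.conjTranspose_smul, StabAux.pw_conjTranspose]
    constructor
    · rw [Matrix.smul_mul, Matrix.mul_smul, smul_smul, StabAux.pw_sq, hcc g hg, one_smul]
    · rw [Matrix.smul_mul, Matrix.mul_smul, smul_smul, StabAux.pw_sq, mul_comm (c g) (star (c g)),
        hcc g hg, one_smul]
  have hstarmem : ∀ g ∈ G, gᴴ ∈ G := by
    intro g hg
    obtain ⟨h, hhG, hgh⟩ := hinv g hg
    have hEq : gᴴ = h := by
      calc gᴴ = gᴴ * (g * h) := by rw [hgh, Matrix.mul_one]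
        _ = (gᴴ * g) * h := by rw [Matrix.mul_assoc]
        _ = h := by rw [(hstar1 g hg).1, Matrix.one_mul]
    rw [hEq]; exact hhG
  -- finiteness of G
  have hGfin : G.Finite := by
    apply Set.Finite.subset (Set.finite_range fun cf : Fin 4 × (Fin n → Fin 4) =>
      ((![1, -1, Complex.I, -Complex.I] cf.1 : ℂ) • StabAux.pw cf.2))
    intro g hg
    rcases hc g hg with h | h | h | h
    · exact ⟨(0, f g), by simpa [h] using (hrep' g hg).symm⟩
    · exact ⟨(1, f g), by simpa [h] using (hrep' g hg).symm⟩
    · exact ⟨(2, f g), by simpa [h] using (hrep' g hg).symm⟩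
    · exact ⟨(3, f g), by simpa [h] using (hrep' g hg).symm⟩
  set 𝒢 := hGfin.toFinset with h𝒢
  have hmem𝒢 : ∀ g, g ∈ 𝒢 ↔ g ∈ G := fun g => Set.Finite.mem_toFinset hGfin
  have hone𝒢 : (1 : Matrix (Fin n → Fin 2) (Fin n → Fin 2) ℂ) ∈ 𝒢 := (hmem𝒢 1).2 hone
  have hNne : ((𝒢.card : ℂ)) ≠ 0 := by
    have hpos : 0 < 𝒢.card := Finset.card_pos.2 ⟨1, hone𝒢⟩
    exact_mod_cast Nat.cast_ne_zero.2 hpos.ne'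
  -- stabilizer acts trivially on the range of V
  have hgV : ∀ g ∈ G, g * V = V := by
    intro g hg
    apply StabAux.ext_mulVec
    intro x
    have hx : V *ᵥ x ∈ {ψ | ∀ g ∈ G, g *ᵥ ψ = ψ} := by
      rw [← hrange]; exact Set.mem_range_self x
    rw [← Matrix.mulVec_mulVec]
    exact hx g hg
  have hVg : ∀ g ∈ G, Vᴴ * g = Vᴴ := by
    intro g hg
    have h1 := congrArg Matrix.conjTranspose (hgV gᴴ (hstarmem g hg))
    simpa [Matrix.conjTranspose_mul] using h1
  -- invariance of the group sum
  have hsuminv : ∀ h ∈ G, h * (∑ g ∈ 𝒢, g) = ∑ g ∈ 𝒢, g := by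
    intro h hh
    rw [Matrix.mul_sum]
    refine Finset.sum_nbij' (fun g => h * g) (fun g => hᴴ * g) ?_ ?_ ?_ ?_ ?_
    · intro a ha
      exact (hmem𝒢 _).2 (hmul h hh a ((hmem𝒢 a).1 ha))
    · intro a ha
      exact (hmem𝒢 _).2 (hmul hᴴ (hstarmem h hh) a ((hmem𝒢 a).1 ha))
    · intro a _
      show hᴴ * (h * a) = a
      rw [← Matrix.mul_assoc, (hstar1 h hh).1, Matrix.one_mul]
    · intro a _
      show h * (hᴴ * a) = a
      rw [← Matrix.mul_assoc, (hstar1 h hh).2, Matrix.one_mul]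
    · intro a _
      rfl
  -- the code projector
  set Pi : Matrix (Fin n → Fin 2) (Fin n → Fin 2) ℂ := ((𝒢.card : ℂ))⁻¹ • ∑ g ∈ 𝒢, g with hPi
  have hPiV : Pi * V = V := by
    rw [hPi, Matrix.smul_mul, Matrix.sum_mul,
      Finset.sum_congr rfl fun g hg => hgV g ((hmem𝒢 g).1 hg),
      Finset.sum_const, ← Nat.cast_smul_eq_nsmul ℂ, smul_smul, inv_mul_cancel₀ hNne, one_smul]
  have hVPi : Vᴴ * Pi = Vᴴ := by
    rw [hPi, Matrix.mul_smul, Matrix.mul_sum,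
      Finset.sum_congr rfl fun g hg => hVg g ((hmem𝒢 g).1 hg),
      Finset.sum_const, ← Nat.cast_smul_eq_nsmul ℂ, smul_smul, inv_mul_cancel₀ hNne, one_smul]
  have hProj : V * Vᴴ = Pi := by
    have h5 : V * Vᴴ * Pi = Pi := by
      apply StabAux.ext_mulVec
      intro ψ
      have hmemr : Pi *ᵥ ψ ∈ Set.range V.mulVec := by
        rw [hrange]
        intro h hh
        rw [Matrix.mulVec_mulVec, hPi, Matrix.mul_smul, hsuminv h hh]
      obtain ⟨x, hx⟩ := hmemr
      have hVVV : V * Vᴴ * V = V := by rw [Matrix.mul_assoc, hV, Matrix.mul_one]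
      calc (V * Vᴴ * Pi) *ᵥ ψ = (V * Vᴴ) *ᵥ (Pi *ᵥ ψ) := by rw [Matrix.mulVec_mulVec]
        _ = (V * Vᴴ) *ᵥ (V *ᵥ x) := by rw [hx]
        _ = (V * Vᴴ * V) *ᵥ x := by rw [Matrix.mulVec_mulVec]
        _ = V *ᵥ x := by rw [hVVV]
        _ = Pi *ᵥ ψ := hx
    have h6 : V * Vᴴ * Pi = V * Vᴴ := by rw [Matrix.mul_assoc, hVPi]
    rw [← h5, h6]
  -- A-part Pauli word of a group element
  set gAw : Matrix (Fin n → Fin 2) (Fin n → Fin 2) ℂ →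
      Matrix ({ k // p k } → Fin 2) ({ k // p k } → Fin 2) ℂ :=
    fun g => StabAux.pw (fun k : {k // p k} => f g k) with hgAw
  -- the key action lemma
  have hact : ∀ g ∈ G, ∀ Q : Matrix ({ k // p k } → Fin 2) ({ k // p k } → Fin 2) ℂ,
      g * ((Q ⊗ₖ (1 : Matrix ({ k // ¬ p k } → Fin 2) ({ k // ¬ p k } → Fin 2) ℂ)).submatrix
          (splitEquiv p) (splitEquiv p)) * V
        = (((gAw g * Q * gAw g) ⊗ₖ (1 : Matrix ({ k // ¬ p k } → Fin 2) ({ k // ¬ p k } → Fin 2) ℂ)).submatrix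
          (splitEquiv p) (splitEquiv p)) * V := by
    intro g hg Q
    set PA := StabAux.pw (fun k : {k // p k} => f g k) with hPA
    set PB := StabAux.pw (fun k : {k // ¬ p k} => f g k) with hPB
    have hdec : g = c g • ((PA ⊗ₖ PB).submatrix (splitEquiv p) (splitEquiv p)) := by
      conv_lhs => rw [hrep' g hg]
      rw [StabAux.pw_split p (f g)]
    have hL : g * ((Q ⊗ₖ (1 : Matrix ({ k // ¬ p k } → Fin 2) ({ k // ¬ p k } → Fin 2) ℂ)).submatrix
          (splitEquiv p) (splitEquiv p)) * V
        = c g • ((((PA * Q) ⊗ₖ PB).submatrix (splitEquiv p) (splitEquiv p)) * V) := by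
      conv_lhs => rw [hdec]
      rw [Matrix.smul_mul, Matrix.smul_mul, hσmul, ← mul_kronecker_mul, Matrix.mul_one]
    have hR : (((PA * Q * PA) ⊗ₖ (1 : Matrix ({ k // ¬ p k } → Fin 2) ({ k // ¬ p k } → Fin 2) ℂ)).submatrix
          (splitEquiv p) (splitEquiv p)) * V
        = c g • ((((PA * Q) ⊗ₖ PB).submatrix (splitEquiv p) (splitEquiv p)) * V) := by
      have hPAsq : PA * PA = 1 := StabAux.pw_sq _
      conv_lhs => rw [← hgV g hg, ← Matrix.mul_assoc, hdec]
      rw [Matrix.mul_smul, Matrix.smul_mul, hσmul, ← mul_kronecker_mul, Matrix.one_mul,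
        Matrix.mul_assoc (PA * Q) PA PA, hPAsq, Matrix.mul_one]
    rw [hL, hR]
  -- membership helper
  have hCmem : ∀ OA : Matrix ({ k // p k } → Fin 2) ({ k // p k } → Fin 2) ℂ,
      Vᴴ * ((OA ⊗ₖ (1 : Matrix ({ k // ¬ p k } → Fin 2) ({ k // ¬ p k } → Fin 2) ℂ)).submatrix
        (splitEquiv p) (splitEquiv p)) * V ∈ qubitCorrectable p V := fun OA => ⟨OA, rfl⟩
  -- linearity helpers
  have hlin : ∀ {γ : Type} (s : Finset γ)
      (F : γ → Matrix ({ k // p k } → Fin 2) ({ k // p k } → Fin 2) ℂ),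
      ∑ x ∈ s, Vᴴ * ((F x ⊗ₖ (1 : Matrix ({ k // ¬ p k } → Fin 2) ({ k // ¬ p k } → Fin 2) ℂ)).submatrix
          (splitEquiv p) (splitEquiv p)) * V
        = Vᴴ * (((∑ x ∈ s, F x) ⊗ₖ (1 : Matrix ({ k // ¬ p k } → Fin 2) ({ k // ¬ p k } → Fin 2) ℂ)).submatrix
          (splitEquiv p) (splitEquiv p)) * V := by
    intro γ s F
    rw [StabAux.kron_sum_left, StabAux.submatrix_sum, Matrix.mul_sum, Matrix.sum_mul]
  have hsmulout : ∀ (a : ℂ) (T : Matrix ({ k // p k } → Fin 2) ({ k // p k } → Fin 2) ℂ),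
      Vᴴ * (((a • T) ⊗ₖ (1 : Matrix ({ k // ¬ p k } → Fin 2) ({ k // ¬ p k } → Fin 2) ℂ)).submatrix
          (splitEquiv p) (splitEquiv p)) * V
        = a • (Vᴴ * ((T ⊗ₖ (1 : Matrix ({ k // ¬ p k } → Fin 2) ({ k // ¬ p k } → Fin 2) ℂ)).submatrix
          (splitEquiv p) (splitEquiv p)) * V) := by
    intro a T
    rw [Matrix.smul_kronecker, StabAux.submatrix_smul', Matrix.mul_smul, Matrix.smul_mul]
  -- the key product formula
  have hkey : ∀ OA OB : Matrix ({ k // p k } → Fin 2) ({ k // p k } → Fin 2) ℂ,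
      (Vᴴ * ((OA ⊗ₖ (1 : Matrix ({ k // ¬ p k } → Fin 2) ({ k // ¬ p k } → Fin 2) ℂ)).submatrix
          (splitEquiv p) (splitEquiv p)) * V) *
      (Vᴴ * ((OB ⊗ₖ (1 : Matrix ({ k // ¬ p k } → Fin 2) ({ k // ¬ p k } → Fin 2) ℂ)).submatrix
          (splitEquiv p) (splitEquiv p)) * V)
        = (𝒢.card : ℂ)⁻¹ • ∑ g ∈ 𝒢, Vᴴ *
            (((OA * (gAw g * OB * gAw g)) ⊗ₖ (1 : Matrix ({ k // ¬ p k } → Fin 2) ({ k // ¬ p k } → Fin 2) ℂ)).submatrix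
              (splitEquiv p) (splitEquiv p)) * V := by
    intro OA OB
    have step1 : (Vᴴ * ((OA ⊗ₖ (1 : Matrix ({ k // ¬ p k } → Fin 2) ({ k // ¬ p k } → Fin 2) ℂ)).submatrix
          (splitEquiv p) (splitEquiv p)) * V) *
        (Vᴴ * ((OB ⊗ₖ (1 : Matrix ({ k // ¬ p k } → Fin 2) ({ k // ¬ p k } → Fin 2) ℂ)).submatrix
          (splitEquiv p) (splitEquiv p)) * V)
        = Vᴴ * ((OA ⊗ₖ (1 : Matrix ({ k // ¬ p k } → Fin 2) ({ k // ¬ p k } → Fin 2) ℂ)).submatrix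
          (splitEquiv p) (splitEquiv p)) * (Pi * (((OB ⊗ₖ (1 : Matrix ({ k // ¬ p k } → Fin 2) ({ k // ¬ p k } → Fin 2) ℂ)).submatrix
          (splitEquiv p) (splitEquiv p)) * V)) := by
      rw [← hProj]
      simp only [Matrix.mul_assoc]
    rw [step1, hPi, Matrix.smul_mul, Matrix.sum_mul, Matrix.mul_smul, Matrix.mul_sum]
    congr 1
    refine Finset.sum_congr rfl fun g hg => ?_
    have h2 := hact g ((hmem𝒢 g).1 hg) OB
    calc Vᴴ * ((OA ⊗ₖ (1 : Matrix ({ k // ¬ p k } → Fin 2) ({ k // ¬ p k } → Fin 2) ℂ)).submatrix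
            (splitEquiv p) (splitEquiv p)) *
          (g * (((OB ⊗ₖ (1 : Matrix ({ k // ¬ p k } → Fin 2) ({ k // ¬ p k } → Fin 2) ℂ)).submatrix
            (splitEquiv p) (splitEquiv p)) * V))
        = Vᴴ * (((OA ⊗ₖ (1 : Matrix ({ k // ¬ p k } → Fin 2) ({ k // ¬ p k } → Fin 2) ℂ)).submatrix
            (splitEquiv p) (splitEquiv p)) * ((((gAw g * OB * gAw g) ⊗ₖ (1 : Matrix ({ k // ¬ p k } → Fin 2) ({ k // ¬ p k } → Fin 2) ℂ)).submatrix
            (splitEquiv p) (splitEquiv p)) * V)) := by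
          rw [← Matrix.mul_assoc g, h2]
          simp only [Matrix.mul_assoc]
      _ = Vᴴ * (((OA * (gAw g * OB * gAw g)) ⊗ₖ (1 : Matrix ({ k // ¬ p k } → Fin 2) ({ k // ¬ p k } → Fin 2) ℂ)).submatrix
            (splitEquiv p) (splitEquiv p)) * V := by
          rw [← Matrix.mul_assoc ((OA ⊗ₖ (1 : Matrix ({ k // ¬ p k } → Fin 2) ({ k // ¬ p k } → Fin 2) ℂ)).submatrix
            (splitEquiv p) (splitEquiv p)), hσmul, ← mul_kronecker_mul, Matrix.mul_one]
          simp only [Matrix.mul_assoc]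
  -- closure under multiplication
  have hclosed : ∀ X ∈ qubitCorrectable p V, ∀ Y ∈ qubitCorrectable p V,
      X * Y ∈ qubitCorrectable p V := by
    rintro X ⟨OA, rfl⟩ Y ⟨OB, rfl⟩
    refine ⟨(𝒢.card : ℂ)⁻¹ • ∑ g ∈ 𝒢, OA * (gAw g * OB * gAw g), ?_⟩
    rw [hkey OA OB, hsmulout, hlin]
  refine ⟨hclosed, ?_, le_refl _, ?_⟩
  · -- von Neumann algebra
    constructor
    · rintro X ⟨OA, rfl⟩ Y ⟨OB, rfl⟩
      refine ⟨OA + OB, ?_⟩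
      rw [Matrix.add_kronecker, StabAux.submatrix_add', Matrix.mul_add, Matrix.add_mul]
    · exact hclosed
    · rintro a X ⟨OA, rfl⟩
      exact ⟨a • OA, by rw [hsmulout]⟩
    · rintro X ⟨OA, rfl⟩
      refine ⟨OAᴴ, ?_⟩
      rw [Matrix.conjTranspose_mul, Matrix.conjTranspose_mul, Matrix.conjTranspose_conjTranspose,
        Matrix.conjTranspose_submatrix, StabAux.kron_conjTranspose, Matrix.conjTranspose_one,
        Matrix.mul_assoc]
    · refine ⟨1, ?_⟩
      rw [Matrix.one_kronecker_one, Matrix.submatrix_one_equiv, Matrix.mul_one, hV]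
  · -- complementary recovery
    intro X hX
    set dA := (Fintype.card ({ k // p k } → Fin 2) : ℂ) with hdA
    set Y' := (V * X * Vᴴ).submatrix (⇑(splitEquiv p).symm) (⇑(splitEquiv p).symm) with hY'
    set bet : Matrix ({ k // ¬ p k } → Fin 2) ({ k // ¬ p k } → Fin 2) ℂ :=
      Matrix.of fun b b' => dA * ∑ k, Y' (k, b) (k, b') with hbet
    set lam : ℂ := (𝒢.card : ℂ)⁻¹ * (dA * ∑ g ∈ 𝒢, (gAw g).trace) with hlam
    set m : ({ k // p k } → Fin 4) → Matrix ιL ιL ℂ := fun u =>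
      Vᴴ * ((StabAux.pw u ⊗ₖ (1 : Matrix ({ k // ¬ p k } → Fin 2) ({ k // ¬ p k } → Fin 2) ℂ)).submatrix
        (splitEquiv p) (splitEquiv p)) * V with hm
    have hmM : ∀ u, m u ∈ qubitCorrectable p V := fun u => ⟨_, rfl⟩
    -- trace dichotomy
    have hdAne : dA ≠ 0 := by
      rw [hdA]
      exact_mod_cast Nat.cast_ne_zero.2 Fintype.card_ne_zero
    have htrvals : ∀ g, (gAw g).trace = 0 ∨ gAw g = 1 ∧ (gAw g).trace = dA := by
      intro g
      by_cases hz : ∀ k : {k // p k}, f g k = 0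
      · right
        have h1 : gAw g = 1 := StabAux.pw_of_zero _ hz
        exact ⟨h1, by rw [h1, Matrix.trace_one, hdA]⟩
      · left
        push_neg at hz
        obtain ⟨k, hk⟩ := hz
        rw [hgAw, StabAux.pw_trace]
        refine Finset.prod_eq_zero (Finset.mem_univ k) ?_
        rw [StabAux.pauli1_trace]
        simp [hk]
    have hdi : ∀ g, ((gAw g).trace) • (Vᴴ * ((gAw g ⊗ₖ (1 : Matrix ({ k // ¬ p k } → Fin 2) ({ k // ¬ p k } → Fin 2) ℂ)).submatrix
          (splitEquiv p) (splitEquiv p)) * V) = ((gAw g).trace) • (1 : Matrix ιL ιL ℂ) := by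
      intro g
      rcases htrvals g with h | ⟨h1, _⟩
      · rw [h, zero_smul, zero_smul]
      · rw [h1, Matrix.one_kronecker_one, Matrix.submatrix_one_equiv, Matrix.mul_one, hV]
    -- sum of squares of the twirl operators
    have hsum2 : ∑ u : ({ k // p k } → Fin 4), m u * m u = lam • 1 := by
      have h1 : ∀ u : ({ k // p k } → Fin 4), m u * m u
          = (𝒢.card : ℂ)⁻¹ • ∑ g ∈ 𝒢, Vᴴ *
            (((StabAux.pw u * (gAw g * StabAux.pw u * gAw g)) ⊗ₖ (1 : Matrix ({ k // ¬ p k } → Fin 2) ({ k // ¬ p k } → Fin 2) ℂ)).submatrix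
              (splitEquiv p) (splitEquiv p)) * V := fun u => hkey (StabAux.pw u) (StabAux.pw u)
      calc ∑ u : ({ k // p k } → Fin 4), m u * m u
          = (𝒢.card : ℂ)⁻¹ • ∑ g ∈ 𝒢, ∑ u : ({ k // p k } → Fin 4), Vᴴ *
              (((StabAux.pw u * (gAw g * StabAux.pw u * gAw g)) ⊗ₖ (1 : Matrix ({ k // ¬ p k } → Fin 2) ({ k // ¬ p k } → Fin 2) ℂ)).submatrix
                (splitEquiv p) (splitEquiv p)) * V := by
            rw [Finset.sum_congr rfl fun u _ => h1 u, ← Finset.smul_sum, Finset.sum_comm]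
        _ = (𝒢.card : ℂ)⁻¹ • ∑ g ∈ 𝒢, (dA * (gAw g).trace) • (Vᴴ *
              ((gAw g ⊗ₖ (1 : Matrix ({ k // ¬ p k } → Fin 2) ({ k // ¬ p k } → Fin 2) ℂ)).submatrix
                (splitEquiv p) (splitEquiv p)) * V) := by
            congr 1
            refine Finset.sum_congr rfl fun g _ => ?_
            rw [hlin]
            have h2 : ∑ u : ({ k // p k } → Fin 4), StabAux.pw u * (gAw g * StabAux.pw u * gAw g)
                = (dA * (gAw g).trace) • gAw g := by
              calc ∑ u : ({ k // p k } → Fin 4), StabAux.pw u * (gAw g * StabAux.pw u * gAw g)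
                  = ∑ u : ({ k // p k } → Fin 4), (StabAux.pw u * gAw g * StabAux.pw u) * gAw g := by
                    refine Finset.sum_congr rfl fun u _ => ?_
                    simp only [Matrix.mul_assoc]
                _ = (∑ u : ({ k // p k } → Fin 4), StabAux.pw u * gAw g * StabAux.pw u) * gAw g := by
                    rw [Matrix.sum_mul]
                _ = ((dA * (gAw g).trace) • (1 : Matrix ({ k // p k } → Fin 2) ({ k // p k } → Fin 2) ℂ)) * gAw g := by
                    rw [StabAux.pw_twirl, hdA]
                _ = (dA * (gAw g).trace) • gAw g := by
                    rw [Matrix.smul_mul, Matrix.one_mul]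
            rw [h2, hsmulout]
        _ = lam • 1 := by
            rw [Finset.sum_congr rfl fun g _ => by rw [mul_smul, hdi g, ← mul_smul]]
            rw [← Finset.sum_smul, ← Finset.mul_sum, smul_smul, hlam]
    -- the twirled operator
    have hS1 : ∑ u : ({ k // p k } → Fin 4), m u * X * m u = lam • X := by
      calc ∑ u : ({ k // p k } → Fin 4), m u * X * m u
          = ∑ u : ({ k // p k } → Fin 4), (m u * m u) * X := by
            refine Finset.sum_congr rfl fun u _ => ?_
            rw [Matrix.mul_assoc, ← hX _ (hmM u), ← Matrix.mul_assoc]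
        _ = (∑ u : ({ k // p k } → Fin 4), m u * m u) * X := by rw [Matrix.sum_mul]
        _ = lam • X := by rw [hsum2, Matrix.smul_mul, Matrix.one_mul]
    have hYid : V * X * Vᴴ = Y'.submatrix (splitEquiv p) (splitEquiv p) := by
      rw [hY', Matrix.submatrix_submatrix]
      rw [show (⇑(splitEquiv p).symm ∘ ⇑(splitEquiv p)) = id from Equiv.symm_comp_self _]
      rw [Matrix.submatrix_id_id]
    have hS3 : ∑ u : ({ k // p k } → Fin 4), m u * X * m u
        = Vᴴ * ((((1 : Matrix ({ k // p k } → Fin 2) ({ k // p k } → Fin 2) ℂ)) ⊗ₖ bet).submatrix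
          (splitEquiv p) (splitEquiv p)) * V := by
      have h1 : ∀ u : ({ k // p k } → Fin 4), m u * X * m u
          = Vᴴ * ((((StabAux.pw u ⊗ₖ (1 : Matrix ({ k // ¬ p k } → Fin 2) ({ k // ¬ p k } → Fin 2) ℂ)) * Y' *
              (StabAux.pw u ⊗ₖ (1 : Matrix ({ k // ¬ p k } → Fin 2) ({ k // ¬ p k } → Fin 2) ℂ))).submatrix
            (splitEquiv p) (splitEquiv p))) * V := by
        intro u
        rw [hm]
        calc (Vᴴ * ((StabAux.pw u ⊗ₖ (1 : Matrix ({ k // ¬ p k } → Fin 2) ({ k // ¬ p k } → Fin 2) ℂ)).submatrix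
              (splitEquiv p) (splitEquiv p)) * V) * X *
            (Vᴴ * ((StabAux.pw u ⊗ₖ (1 : Matrix ({ k // ¬ p k } → Fin 2) ({ k // ¬ p k } → Fin 2) ℂ)).submatrix
              (splitEquiv p) (splitEquiv p)) * V)
            = Vᴴ * (((StabAux.pw u ⊗ₖ (1 : Matrix ({ k // ¬ p k } → Fin 2) ({ k // ¬ p k } → Fin 2) ℂ)).submatrix
              (splitEquiv p) (splitEquiv p)) * ((V * X * Vᴴ) * (((StabAux.pw u ⊗ₖ (1 : Matrix ({ k // ¬ p k } → Fin 2) ({ k // ¬ p k } → Fin 2) ℂ)).submatrix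
              (splitEquiv p) (splitEquiv p)) * V))) := by
              simp only [Matrix.mul_assoc]
          _ = Vᴴ * ((((StabAux.pw u ⊗ₖ (1 : Matrix ({ k // ¬ p k } → Fin 2) ({ k // ¬ p k } → Fin 2) ℂ)) * Y' *
                (StabAux.pw u ⊗ₖ (1 : Matrix ({ k // ¬ p k } → Fin 2) ({ k // ¬ p k } → Fin 2) ℂ))).submatrix
              (splitEquiv p) (splitEquiv p))) * V := by
              rw [hYid, ← Matrix.mul_assoc (Y'.submatrix (splitEquiv p) (splitEquiv p)), hσmul,
                ← Matrix.mul_assoc (((StabAux.pw u ⊗ₖ (1 : Matrix ({ k // ¬ p k } → Fin 2) ({ k // ¬ p k } → Fin 2) ℂ)).submatrix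
                  (splitEquiv p) (splitEquiv p))), hσmul]
              simp only [Matrix.mul_assoc]
      rw [Finset.sum_congr rfl fun u _ => h1 u]
      rw [← Matrix.sum_mul, ← Matrix.mul_sum, ← StabAux.submatrix_sum]
      rw [StabAux.pw_twirl_kron Y', hbet, hdA]
    -- nonvanishing of lam
    have htr1 : (gAw 1).trace = dA := by
      have h1 : (1 : Matrix (Fin n → Fin 2) (Fin n → Fin 2) ℂ) = c 1 • StabAux.pw (f 1) :=
        hrep' 1 hone
      have h2 : ((Fintype.card (Fin n → Fin 2) : ℂ)) = c 1 * ∏ i, (pauli1 (f 1 i)).trace := by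
        have h3 := congrArg Matrix.trace h1
        rwa [Matrix.trace_one, Matrix.trace_smul, StabAux.pw_trace, smul_eq_mul] at h3
      have hcard : ((Fintype.card (Fin n → Fin 2) : ℂ)) ≠ 0 :=
        Nat.cast_ne_zero.2 Fintype.card_ne_zero
      have hz : ∀ i : Fin n, f 1 i = 0 := by
        intro i
        by_contra hne
        apply hcard
        rw [h2, Finset.prod_eq_zero (Finset.mem_univ i)
          (by rw [StabAux.pauli1_trace]; simp [hne]), mul_zero]
      simp only [hgAw]
      rw [show StabAux.pw (fun k : {k // p k} => f 1 k) = 1 from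
        StabAux.pw_of_zero _ fun k => hz k, Matrix.trace_one, hdA]
    have hsumtr : (∑ g ∈ 𝒢, (gAw g).trace) ≠ 0 := by
      have hre : ∀ g ∈ 𝒢, (gAw g).trace = if (gAw g).trace ≠ 0 then dA else 0 := by
        intro g _
        rcases htrvals g with h | ⟨_, h⟩
        · simp [h]
        · simp [h, hdAne]
      rw [Finset.sum_congr rfl hre, Finset.sum_ite, Finset.sum_const, Finset.sum_const_zero,
        add_zero]
      have hmemf : (1 : Matrix (Fin n → Fin 2) (Fin n → Fin 2) ℂ) ∈
          𝒢.filter (fun g => (gAw g).trace ≠ 0) :=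
        Finset.mem_filter.2 ⟨hone𝒢, by rw [htr1]; exact hdAne⟩
      have hcardpos : 0 < (𝒢.filter (fun g => (gAw g).trace ≠ 0)).card :=
        Finset.card_pos.2 ⟨1, hmemf⟩
      rw [nsmul_eq_mul]
      exact mul_ne_zero (Nat.cast_ne_zero.2 hcardpos.ne') hdAne
    have hlamne : lam ≠ 0 := by
      rw [hlam]
      exact mul_ne_zero (inv_ne_zero hNne) (mul_ne_zero hdAne hsumtr)
    -- conclude
    refine ⟨lam⁻¹ • bet, ?_⟩
    have hXeq : X = lam⁻¹ • (Vᴴ * ((((1 : Matrix ({ k // p k } → Fin 2) ({ k // p k } → Fin 2) ℂ)) ⊗ₖ bet).submatrix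
        (splitEquiv p) (splitEquiv p)) * V) := by
      rw [← hS3, hS1, smul_smul, inv_mul_cancel₀ hlamne, one_smul]
    rw [hXeq, Matrix.kronecker_smul, StabAux.submatrix_smul', Matrix.mul_smul, Matrix.smul_mul]
end

section
/- Let H = ℂ² ⊗ ℂ² (two qubits), H_L = ℂ³ with orthonormal basis |0⟩, |1⟩, |2⟩, and let V : H_L → H be the isometry defined by V|0⟩ = |0⟩⊗|0⟩, V|1⟩ = |0⟩⊗|1⟩, V|2⟩ = |1⟩⊗|0⟩. Let A be the first qubit, so H_A = ℂ² and H_Ā = ℂ². Then: (i) the set V†(L(H_A) ⊗ I_Ā)V is not closed under operator multiplication (hence is not a von Neumann algebra); and (ii) there exists no von Neumann algebra N on H_L such that (V, A, N) satisfies complementary recovery. -/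
open Matrix Kronecker

/-- The set `V†(I_A ⊗ L(H_Ā))V` of logical operators correctable from `Ā`. -/
def correctableOpsBar {ιA ιB ιL : Type*} [Fintype ιA] [DecidableEq ιA] [Fintype ιB]
    [Fintype ιL] (V : Matrix (ιA × ιB) ιL ℂ) : Set (Matrix ιL ιL ℂ) :=
  {O | ∃ OB : Matrix ιB ιB ℂ, O = Vᴴ * ((1 : Matrix ιA ιA ℂ) ⊗ₖ OB) * V}

/-- Complementary recovery for the triple `(V, A, M)`. -/
def ComplementaryRecovery {ιA ιB ιL : Type*}
    [Fintype ιA] [DecidableEq ιA] [Fintype ιB] [DecidableEq ιB] [Fintype ιL]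
    (V : Matrix (ιA × ιB) ιL ℂ) (M : Set (Matrix ιL ιL ℂ)) : Prop :=
  M ⊆ correctableOps V ∧ commutant M ⊆ correctableOpsBar V

/-- The qutrit-into-two-qubits isometry `V|0⟩ = |00⟩`, `V|1⟩ = |01⟩`, `V|2⟩ = |10⟩`. -/
def V13 : Matrix (Fin 2 × Fin 2) (Fin 3) ℂ :=
  Matrix.of fun q l =>
    if q = (0, 0) ∧ l = 0 then 1
    else if q = (0, 1) ∧ l = 1 then 1
    else if q = (1, 0) ∧ l = 2 then 1
    else 0

/-!
Compressing `L(H_A) ⊗ I_Ā` by `V13` gives the matrices `!![p, 0, q; 0, p, 0; r, 0, s]`: the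
tied diagonal entries at `|0⟩, |1⟩` make the set fail to be closed under products. If a
`*`-algebra `N` lies in this set, comparing the tied entries of `X Xᴴ` and `Xᴴ X` forces
`q = r = 0`, so `N` is diagonal and its commutant contains the projection onto `|0⟩`. That
projection is not correctable from `Ā`, whose compressions tie the entries at `|0⟩, |2⟩`.
-/

theorem diagonal_mem_commutant {ι : Type*} [Fintype ι] [DecidableEq ι]
    {M : Set (Matrix ι ι ℂ)} (hM : ∀ A ∈ M, ∃ d, A = diagonal d) (e : ι → ℂ) :
    diagonal e ∈ commutant M := by
  intro A hA
  obtain ⟨d, rfl⟩ := hM A hA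
  exact commute_diagonal d e

theorem V13_conjTranspose_mul_kronecker_one_mul (OA : Matrix (Fin 2) (Fin 2) ℂ) :
    V13ᴴ * (OA ⊗ₖ (1 : Matrix (Fin 2) (Fin 2) ℂ)) * V13 =
      !![OA 0 0, 0, OA 0 1; 0, OA 0 0, 0; OA 1 0, 0, OA 1 1] := by
  ext i j
  fin_cases i <;> fin_cases j <;>
    simp [Matrix.mul_apply, Fintype.sum_prod_type, V13, Matrix.one_apply]

theorem V13_conjTranspose_mul_one_kronecker_mul (OB : Matrix (Fin 2) (Fin 2) ℂ) :
    V13ᴴ * ((1 : Matrix (Fin 2) (Fin 2) ℂ) ⊗ₖ OB) * V13 =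
      !![OB 0 0, OB 0 1, 0; OB 1 0, OB 1 1, 0; 0, 0, OB 0 0] := by
  ext i j
  fin_cases i <;> fin_cases j <;>
    simp [Matrix.mul_apply, Fintype.sum_prod_type, V13, Matrix.one_apply]

theorem mem_correctableOps_V13 {O : Matrix (Fin 3) (Fin 3) ℂ} :
    O ∈ correctableOps V13 ↔ ∃ p q r s : ℂ, O = !![p, 0, q; 0, p, 0; r, 0, s] := by
  simp only [correctableOps, Set.mem_ofPred_eq, V13_conjTranspose_mul_kronecker_one_mul]
  constructor
  · rintro ⟨OA, rfl⟩
    exact ⟨_, _, _, _, rfl⟩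
  · rintro ⟨p, q, r, s, rfl⟩
    exact ⟨!![p, q; r, s], by simp⟩

theorem apply_one_one_eq_of_mem_correctableOps_V13 {O : Matrix (Fin 3) (Fin 3) ℂ}
    (hO : O ∈ correctableOps V13) : O 1 1 = O 0 0 := by
  obtain ⟨p, q, r, s, rfl⟩ := mem_correctableOps_V13.mp hO
  rfl

theorem apply_two_two_eq_of_mem_correctableOpsBar_V13 {O : Matrix (Fin 3) (Fin 3) ℂ}
    (hO : O ∈ correctableOpsBar V13) : O 2 2 = O 0 0 := by
  obtain ⟨OB, rfl⟩ := hO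
  rw [V13_conjTranspose_mul_one_kronecker_mul]
  rfl

theorem not_mul_mem_correctableOps_V13 :
    ¬ ∀ X ∈ correctableOps V13, ∀ Y ∈ correctableOps V13, X * Y ∈ correctableOps V13 := by
  intro h
  have hX : !![0, 0, 1; 0, 0, 0; 0, 0, 0] ∈ correctableOps V13 :=
    mem_correctableOps_V13.mpr ⟨0, 1, 0, 0, rfl⟩
  have hY : !![0, 0, 0; 0, 0, 0; 1, 0, 0] ∈ correctableOps V13 :=
    mem_correctableOps_V13.mpr ⟨0, 0, 1, 0, rfl⟩
  have := apply_one_one_eq_of_mem_correctableOps_V13 (h _ hX _ hY)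
  simp at this

theorem exists_diagonal_of_subset_correctableOps_V13 {N : Set (Matrix (Fin 3) (Fin 3) ℂ)}
    (hmul : ∀ A ∈ N, ∀ B ∈ N, A * B ∈ N) (hstar : ∀ A ∈ N, Aᴴ ∈ N)
    (hN : N ⊆ correctableOps V13) {X : Matrix (Fin 3) (Fin 3) ℂ} (hX : X ∈ N) :
    ∃ d, X = diagonal d := by
  obtain ⟨p, q, r, s, rfl⟩ := mem_correctableOps_V13.mp (hN hX)
  -- `(X Xᴴ) 0 0 - (X Xᴴ) 1 1 = ‖q‖ ^ 2` and `(Xᴴ X) 0 0 - (Xᴴ X) 1 1 = ‖r‖ ^ 2`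
  have hq : q = 0 := by
    simpa [Matrix.mul_apply, Fin.sum_univ_three] using
      apply_one_one_eq_of_mem_correctableOps_V13 (hN (hmul _ hX _ (hstar _ hX)))
  have hr : r = 0 := by
    simpa [Matrix.mul_apply, Fin.sum_univ_three] using
      apply_one_one_eq_of_mem_correctableOps_V13 (hN (hmul _ (hstar _ hX) _ hX))
  subst hq hr
  exact ⟨![p, p, s], by ext i j; fin_cases i <;> fin_cases j <;> rfl⟩

/-- a code without complementary recovery: for the isometry `V13`
from a qutrit into two qubits, with `A` the first qubit: (i) the set
`V†(L(H_A) ⊗ I_Ā)V` is not closed under operator multiplication (hence is not a von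
Neumann algebra); and (ii) there exists no von Neumann algebra `N` on the qutrit such
that `(V, A, N)` satisfies complementary recovery. -/
theorem no_complementary_recovery_example :
    (¬ ∀ X ∈ correctableOps V13, ∀ Y ∈ correctableOps V13,
        X * Y ∈ correctableOps V13) ∧
    (¬ IsVNAlgebra (correctableOps V13)) ∧
    (¬ ∃ N : Set (Matrix (Fin 3) (Fin 3) ℂ),
        IsVNAlgebra N ∧ ComplementaryRecovery V13 N) := by
  refine ⟨not_mul_mem_correctableOps_V13,
    fun h => not_mul_mem_correctableOps_V13 h.mul_mem, ?_⟩
  rintro ⟨N, hN, hNA, hN'Abar⟩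
  have hdiag : ∀ X ∈ N, ∃ d, X = diagonal d := fun X hX =>
    exists_diagonal_of_subset_correctableOps_V13 hN.mul_mem hN.star_mem hNA hX
  have := apply_two_two_eq_of_mem_correctableOpsBar_V13
    (hN'Abar (diagonal_mem_commutant hdiag ![1, 0, 0]))
  simp at this
end
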